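/- Let U(u1,u2,ξ) = [8(u2-ξ)² + 8(u2-ξ)(u1-u2) + 3(u1-u2)²](u1+u2+4ξ) - 8(u2-ξ)[2(u2-ξ)² + 3(u2-ξ)(u1-u2) + (u1-u2)²]. If a > b and a + 5b > 0, then the cubic polynomial ξ ↦ U(a,b,ξ) has exactly one real root. -/
import Mathlib


/-- The cubic polynomial U(u1,u2,ξ) from the trailing-edge analysis. -/
def Ucubic (u1 u2 ξ : ℝ) : ℝ :=
  (8 * (u2 - ξ)^2 + 8 * (u2 - ξ) * (u1 - u2) + 3 * (u1 - u2)^2) * (u1 + u2 + 4 * ξ)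
    - 8 * (u2 - ξ) * (2 * (u2 - ξ)^2 + 3 * (u2 - ξ) * (u1 - u2) + (u1 - u2)^2)

lemma Ucubic_eq (a b x : ℝ) :
    Ucubic a b x = 3 * (a - b)^2 * (a + b) + 48 * x * (x - (a + b)/2)^2 := by
  unfold Ucubic; ring

/-- For a > b and a + 5b > 0, U(a,b,·) has exactly one real root. -/
theorem U_unique_root (a b : ℝ) (hab : a > b) (h5 : a + 5 * b > 0) :
    ∃! ξ : ℝ, Ucubic a b ξ = 0 := by
  have hd : a - b > 0 := by linarith
  have hs : a + b > 0 := by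
    rcases le_or_gt b 0 with h | h
    · nlinarith
    · linarith
  -- any root is negative
  have hneg : ∀ x : ℝ, Ucubic a b x = 0 → x < 0 := by
    intro x hx
    rw [Ucubic_eq] at hx
    by_contra h
    push_neg at h
    have t1 : 3 * (a - b)^2 * (a + b) > 0 := by positivity
    have t2 : 48 * x * (x - (a + b)/2)^2 ≥ 0 := by positivity
    linarith
  -- existence via IVT
  set f : ℝ → ℝ := fun x => Ucubic a b x with hf
  have hcont : Continuous f := by
    unfold f; unfold Ucubic; continuity
  set M : ℝ := -(1 + 3 * (a - b)^2 * (a + b)) with hM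
  have hM1 : M ≤ -1 := by nlinarith [sq_nonneg (a - b)]
  have hfM : f M ≤ -1 := by
    show Ucubic a b M ≤ -1
    rw [Ucubic_eq]
    have h1 : (M - (a + b)/2)^2 ≥ M^2 := by nlinarith
    have h2 : 48 * M * (M - (a + b)/2)^2 ≤ 48 * M * M^2 := by nlinarith
    have hMsq : M^2 ≥ 1 := by nlinarith
    have h3 : M^3 ≤ M := by nlinarith [mul_nonneg (neg_nonneg.mpr (by linarith : M ≤ 0)) (by linarith : M^2 - 1 ≥ 0)]
    have hK : 3 * (a - b)^2 * (a + b) ≥ 0 := by positivity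
    nlinarith
  have hf0 : f 0 > 0 := by
    show Ucubic a b 0 > 0
    rw [Ucubic_eq]
    have t1 : 3 * (a - b)^2 * (a + b) > 0 := by positivity
    nlinarith
  have hMle : M ≤ (0:ℝ) := by linarith
  have := intermediate_value_Icc hMle hcont.continuousOn
  have h0mem : (0:ℝ) ∈ Set.Icc (f M) (f 0) := ⟨by linarith, le_of_lt hf0⟩
  obtain ⟨ξ, hξmem, hξ⟩ := this h0mem
  refine ⟨ξ, hξ, ?_⟩
  intro y hy
  have hyneg := hneg y hy
  have hξneg := hneg ξ hξ
  by_contra hne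
  have key : Ucubic a b y - Ucubic a b ξ =
      48 * (y - ξ) * (y^2 + y*ξ + ξ^2 - (a+b)*(y+ξ) + (a+b)^2/4) := by
    rw [Ucubic_eq, Ucubic_eq]; ring
  have hbrack : y^2 + y*ξ + ξ^2 - (a+b)*(y+ξ) + (a+b)^2/4 > 0 := by
    nlinarith [sq_nonneg (y + ξ), sq_nonneg (y - ξ), sq_nonneg (a+b),
      mul_pos hs (neg_pos.mpr hyneg), mul_pos hs (neg_pos.mpr hξneg)]
  have hξ' : Ucubic a b ξ = 0 := hξ
  have hsum : Ucubic a b y - Ucubic a b ξ = 0 := by rw [hy, hξ']; ring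
  rw [key] at hsum
  have h48 : (48:ℝ) * (y - ξ) ≠ 0 := mul_ne_zero (by norm_num) (sub_ne_zero.mpr hne)
  rcases mul_eq_zero.mp hsum with h | h
  · exact h48 h
  · linarith
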